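/- arXiv:2402.16793 — 4 statements merged into one kernel-verified Lean document; each statement's English description precedes it below -/
import Mathlib

section
/- Define ḡ_{δ,K}(x) = Σ_{j=0}^{K-1} δ (1 - δx)^{K-j-1} and ḡ_T(x) = x^{-1}(1 - exp(-Tx)) (with ḡ_T(0) = T). If K → ∞, δ → 0, Kδ → T > 0, then sup_{x ∈ [0,M]} |√x (ḡ_{δ,K}(x) - ḡ_T(x))| → 0 for any fixed M > 0. -/
open Filter Real

lemma aux_pow_sub_pow (c d : ℝ) (hc : 0 ≤ c) (hcd : c ≤ d) (hd : d ≤ 1) (n : ℕ) :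
    d ^ n - c ^ n ≤ n * (d - c) := by
  induction n with
  | zero => simp
  | succ n ih =>
    have hd0 : 0 ≤ d := hc.trans hcd
    have hdn : d ^ n ≤ 1 := pow_le_one₀ hd0 hd
    have hcn : c ^ n ≤ d ^ n := pow_le_pow_left₀ hc hcd n
    have hcn1 : c ^ n ≤ 1 := hcn.trans hdn
    have hcn0 : 0 ≤ c ^ n := pow_nonneg hc n
    have h1 : d * (d ^ n - c ^ n) ≤ 1 * (n * (d - c)) := by
      have := mul_le_mul hd ih (by linarith) zero_le_one
      linarith [this]
    have h2 : (d - c) * c ^ n ≤ (d - c) * 1 :=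
      mul_le_mul_of_nonneg_left hcn1 (by linarith)
    calc d ^ (n+1) - c ^ (n+1) = d * (d ^ n - c ^ n) + (d - c) * c ^ n := by ring
      _ ≤ 1 * (n * (d - c)) + (d - c) * 1 := add_le_add h1 h2
      _ = (n + 1 : ℕ) * (d - c) := by push_cast; ring

lemma aux_exp_lip {a b : ℝ} (hb : 0 ≤ b) (h : b ≤ a) :
    Real.exp (-b) - Real.exp (-a) ≤ a - b := by
  have h1 := Real.add_one_le_exp (b - a)
  have h2 : Real.exp (-b) ≤ 1 := Real.exp_le_one_iff.mpr (by linarith)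
  have h3 : Real.exp (-a) = Real.exp (-b) * Real.exp (b - a) := by
    rw [← Real.exp_add]; ring_nf
  have h4 : Real.exp (b - a) ≤ 1 := Real.exp_le_one_iff.mpr (by linarith)
  nlinarith [Real.exp_pos (-b)]

lemma aux_exp_abs (a b : ℝ) (ha : 0 ≤ a) (hb : 0 ≤ b) :
    |Real.exp (-a) - Real.exp (-b)| ≤ |a - b| := by
  rcases le_total a b with h | h
  · have hmono : Real.exp (-b) ≤ Real.exp (-a) := Real.exp_le_exp.mpr (by linarith)
    have := aux_exp_lip ha h
    rw [abs_of_nonneg (by linarith), abs_of_nonpos (by linarith)]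
    linarith
  · have hmono : Real.exp (-a) ≤ Real.exp (-b) := Real.exp_le_exp.mpr (by linarith)
    have := aux_exp_lip hb h
    rw [abs_of_nonpos (by linarith), abs_of_nonneg (by linarith)]
    linarith
lemma aux_sum_geom (K : ℕ) (δ x : ℝ) (hδ : δ ≠ 0) (hx : x ≠ 0) :
    ∑ j ∈ Finset.range K, δ * (1 - δ * x) ^ (K - j - 1)
      = (1 - (1 - δ * x) ^ K) / x := by
  have hne : (1 : ℝ) - δ * x ≠ 1 := by
    intro h
    apply hδ; have : δ * x = 0 := by linarith
    rcases mul_eq_zero.mp this with h' | h'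
    · exact h'
    · exact absurd h' hx
  have hcongr : ∀ j ∈ Finset.range K,
      δ * (1 - δ * x) ^ (K - j - 1) = (fun i => δ * (1 - δ * x) ^ i) (K - 1 - j) := by
    intro j _
    simp only [Nat.sub_sub, add_comm]
  rw [Finset.sum_congr rfl hcongr,
    Finset.sum_range_reflect (fun i => δ * (1 - δ * x) ^ i) K,
    ← Finset.mul_sum, geom_sum_eq hne]
  field_simp
  ring

lemma aux_pointwise (T M : ℝ) (hT : 0 < T) (hM : 0 < M) (K : ℕ) (δ : ℝ)
    (hδ : 0 < δ) (hδM : δ * M < 1) (x : ℝ) (hx : x ∈ Set.Icc (0:ℝ) M) :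
    |Real.sqrt x *
        ((∑ j ∈ Finset.range K, δ * (1 - δ * x) ^ (K - j - 1)) -
          (if x = 0 then T else (1 - Real.exp (-T * x)) / x))|
      ≤ |(K:ℝ) * δ - T| * Real.sqrt M + ((K:ℝ) * δ) * δ * (M * Real.sqrt M) := by
  obtain ⟨hx0, hxM⟩ := hx
  have hKδ0 : (0:ℝ) ≤ (K:ℝ) * δ := mul_nonneg (Nat.cast_nonneg K) hδ.le
  have hrhs : (0:ℝ) ≤ |(K:ℝ) * δ - T| * Real.sqrt M + ((K:ℝ) * δ) * δ * (M * Real.sqrt M) := by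
    positivity
  rcases eq_or_lt_of_le hx0 with h0 | hx0
  · rw [← h0]; simpa using hrhs
  -- x > 0 case
  have hxne : x ≠ 0 := ne_of_gt hx0
  rw [if_neg hxne, aux_sum_geom K δ x (ne_of_gt hδ) hxne]
  set u : ℝ := δ * x with hu
  have hu0 : 0 < u := mul_pos hδ hx0
  have hu1 : u < 1 := lt_of_le_of_lt (by nlinarith) hδM
  -- expression rewriting
  have hdiff : (1 - (1 - u) ^ K) / x - (1 - Real.exp (-T * x)) / x
      = (Real.exp (-T * x) - (1 - u) ^ K) / x := by
    field_simp
    ring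
  rw [hdiff, abs_mul, abs_div, abs_of_nonneg (Real.sqrt_nonneg x), abs_of_pos hx0]
  -- key bound on the numerator
  set c : ℝ := 1 - u with hc
  set d : ℝ := Real.exp (-u) with hd
  have hcd : c ≤ d := by
    have := Real.add_one_le_exp (-u); simp only [hc, hd]; linarith
  have hd1 : d ≤ 1 := Real.exp_le_one_iff.mpr (by linarith)
  have hc0 : 0 ≤ c := by simp only [hc]; linarith
  have hdK : d ^ K = Real.exp (-((K:ℝ) * δ) * x) := by
    rw [hd, ← Real.exp_nat_mul, hu]; ring_nf
  have hterm2 : |Real.exp (-((K:ℝ) * δ) * x) - (1 - u) ^ K| ≤ (K:ℝ) * u ^ 2 := by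
    rw [← hdK, ← hc]
    have hpow : c ^ K ≤ d ^ K := pow_le_pow_left₀ hc0 hcd K
    rw [abs_of_nonneg (by linarith)]
    have h1 : d ^ K - c ^ K ≤ (K:ℝ) * (d - c) := aux_pow_sub_pow c d hc0 hcd hd1 K
    have h2 : d - c ≤ u ^ 2 := by
      have := Real.abs_exp_sub_one_sub_id_le (x := -u) (by rw [abs_of_nonpos (by linarith)]; linarith)
      have h3 : |Real.exp (-u) - 1 - (-u)| ≤ u ^ 2 := by
        rw [← neg_sq u]; exact this
      simp only [hd, hc]
      have := abs_le.mp h3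
      linarith [this.2]
    nlinarith [Nat.cast_nonneg (α := ℝ) K]
  have hterm1 : |Real.exp (-T * x) - Real.exp (-((K:ℝ) * δ) * x)| ≤ |(K:ℝ) * δ - T| * x := by
    have := aux_exp_abs (T * x) (((K:ℝ) * δ) * x)
      (mul_nonneg hT.le hx0.le) (mul_nonneg hKδ0 hx0.le)
    have heq : |T * x - (K:ℝ) * δ * x| = |(K:ℝ) * δ - T| * x := by
      rw [show T * x - (K:ℝ) * δ * x = -(((K:ℝ) * δ - T) * x) by ring, abs_neg,
        abs_mul, abs_of_pos hx0]
    rw [show -T * x = -(T*x) by ring, show -((K:ℝ)*δ) * x = -((K:ℝ)*δ*x) by ring]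
    calc |Real.exp (-(T * x)) - Real.exp (-((K:ℝ) * δ * x))| ≤ |T * x - (K:ℝ) * δ * x| := this
      _ = |(K:ℝ) * δ - T| * x := heq
  have hnum : |Real.exp (-T * x) - (1 - u) ^ K|
      ≤ (|(K:ℝ) * δ - T| + (K:ℝ) * δ * δ * M) * x := by
    have htri : |Real.exp (-T * x) - (1 - u) ^ K|
        ≤ |Real.exp (-T * x) - Real.exp (-((K:ℝ) * δ) * x)|
          + |Real.exp (-((K:ℝ) * δ) * x) - (1 - u) ^ K| := abs_sub_le _ _ _
    have hu2 : (K:ℝ) * u ^ 2 ≤ (K:ℝ) * δ * δ * M * x := by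
      have : u ^ 2 = δ * δ * x * x := by rw [hu]; ring
      rw [this]
      have : (K:ℝ) * (δ * δ * x * x) ≤ (K:ℝ) * (δ * δ * M * x) := by
        apply mul_le_mul_of_nonneg_left _ (Nat.cast_nonneg K)
        nlinarith
      nlinarith
    calc |Real.exp (-T * x) - (1 - u) ^ K|
        ≤ |(K:ℝ) * δ - T| * x + (K:ℝ) * u ^ 2 := by linarith [htri, hterm1, hterm2]
      _ ≤ |(K:ℝ) * δ - T| * x + (K:ℝ) * δ * δ * M * x := by linarith
      _ = (|(K:ℝ) * δ - T| + (K:ℝ) * δ * δ * M) * x := by ring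
  -- combine: √x * (|num|/x) ≤ √M * (bound)
  have hsx : Real.sqrt x ≤ Real.sqrt M := Real.sqrt_le_sqrt hxM
  have hsx0 : 0 < Real.sqrt x := Real.sqrt_pos.mpr hx0
  have hC0 : (0:ℝ) ≤ |(K:ℝ) * δ - T| + (K:ℝ) * δ * δ * M := by positivity
  calc Real.sqrt x * (|Real.exp (-T * x) - (1 - u) ^ K| / x)
      ≤ Real.sqrt x * ((|(K:ℝ) * δ - T| + (K:ℝ) * δ * δ * M) * x / x) := by
        gcongr

    _ = Real.sqrt x * (|(K:ℝ) * δ - T| + (K:ℝ) * δ * δ * M) := by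
        rw [mul_div_assoc, div_self hxne, mul_one]
    _ ≤ Real.sqrt M * (|(K:ℝ) * δ - T| + (K:ℝ) * δ * δ * M) :=
        mul_le_mul_of_nonneg_right hsx hC0
    _ = |(K:ℝ) * δ - T| * Real.sqrt M + (K:ℝ) * δ * δ * (M * Real.sqrt M) := by ring

/-- Uniform convergence of `√x (ḡ_{δ,K}(x) - ḡ_T(x))` to `0` on `[0, M]`,
where `ḡ_{δ,K}(x) = Σ_{j<K} δ (1-δx)^{K-j-1}` and
`ḡ_T(x) = x⁻¹(1 - exp(-Tx))` (with `ḡ_T(0) = T`). -/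
theorem gd_gf_coefficient_uniform_approx
    (T M : ℝ) (hT : 0 < T) (hM : 0 < M)
    (K : ℕ → ℕ) (δ : ℕ → ℝ)
    (hK : Tendsto K atTop atTop)
    (hδ : Tendsto δ atTop (nhds 0))
    (hKδ : Tendsto (fun m => (K m : ℝ) * δ m) atTop (nhds T)) :
    Tendsto
      (fun m =>
        sSup ((fun x : ℝ =>
          |Real.sqrt x *
            ((∑ j ∈ Finset.range (K m), δ m * (1 - δ m * x) ^ (K m - j - 1)) -
              (if x = 0 then T else (1 - Real.exp (-T * x)) / x))|) ''
            Set.Icc (0:ℝ) M))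
      atTop (nhds 0) := by
  rw [NormedAddCommGroup.tendsto_nhds_zero]
  intro ε hε
  have hsM : 0 < Real.sqrt M := Real.sqrt_pos.mpr hM
  -- eventual facts
  have h1 : ∀ᶠ m in atTop, 0 < δ m := by
    filter_upwards [hKδ.eventually_const_lt (show (0:ℝ) < T from hT)] with m hm
    by_contra h
    push_neg at h
    have : (K m : ℝ) * δ m ≤ 0 := mul_nonpos_of_nonneg_of_nonpos (Nat.cast_nonneg _) h
    linarith
  have h2 : ∀ᶠ m in atTop, δ m * M < 1 := by
    have : Tendsto (fun m => δ m * M) atTop (nhds 0) := by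
      simpa using hδ.mul_const M
    exact this.eventually_lt_const one_pos
  have h3 : ∀ᶠ m in atTop, |(K m : ℝ) * δ m - T| * Real.sqrt M < ε / 4 := by
    have ht : Tendsto (fun m => |(K m : ℝ) * δ m - T| * Real.sqrt M) atTop (nhds 0) := by
      have := ((hKδ.sub_const T).abs).mul_const (Real.sqrt M)
      simpa using this
    exact ht.eventually_lt_const (by positivity)
  have h4 : ∀ᶠ m in atTop, ((K m : ℝ) * δ m) * δ m * (M * Real.sqrt M) < ε / 4 := by
    have ht : Tendsto (fun m => ((K m : ℝ) * δ m) * δ m * (M * Real.sqrt M)) atTop (nhds 0) := by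
      have := (hKδ.mul hδ).mul_const (M * Real.sqrt M)
      simpa using this
    exact ht.eventually_lt_const (by positivity)
  filter_upwards [h1, h2, h3, h4] with m hm1 hm2 hm3 hm4
  set f : ℝ → ℝ := fun x =>
    |Real.sqrt x *
      ((∑ j ∈ Finset.range (K m), δ m * (1 - δ m * x) ^ (K m - j - 1)) -
        (if x = 0 then T else (1 - Real.exp (-T * x)) / x))| with hf
  have hbd : ∀ y ∈ f '' Set.Icc (0:ℝ) M, y ≤ ε / 2 := by
    rintro y ⟨x, hx, rfl⟩
    have := aux_pointwise T M hT hM (K m) (δ m) hm1 hm2 x hx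
    calc f x ≤ |(K m : ℝ) * δ m - T| * Real.sqrt M
        + ((K m : ℝ) * δ m) * δ m * (M * Real.sqrt M) := this
      _ ≤ ε / 4 + ε / 4 := by linarith
      _ = ε / 2 := by ring
  have hne : (f '' Set.Icc (0:ℝ) M).Nonempty :=
    ⟨f 0, ⟨0, ⟨le_refl 0, hM.le⟩, rfl⟩⟩
  have hBdd : BddAbove (f '' Set.Icc (0:ℝ) M) := ⟨ε / 2, hbd⟩
  have hsup_le : sSup (f '' Set.Icc (0:ℝ) M) ≤ ε / 2 := csSup_le hne hbd
  have hsup_ge : 0 ≤ sSup (f '' Set.Icc (0:ℝ) M) := by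
    have hmem : f 0 ∈ f '' Set.Icc (0:ℝ) M := ⟨0, ⟨le_refl 0, hM.le⟩, rfl⟩
    exact le_trans (abs_nonneg _) (le_csSup hBdd hmem)
  rw [Real.norm_eq_abs, abs_of_nonneg hsup_ge]
  linarith
end

section
/- (Ridge LOOCV shortcut) Let X ∈ ℝ^{n×p}, y ∈ ℝ^n, λ > 0, H_λ = X(XᵀX + λI)^{-1}Xᵀ, and let β̂_{λ,-i} minimize ‖y_{-i} - X_{-i}β‖² + λ‖β‖² over β ∈ ℝ^p. Then y_i - x_iᵀβ̂_{λ,-i} = (y_i - x_iᵀβ̂_λ)/(1 - (H_λ)_{ii}), where β̂_λ is the full-data ridge solution, provided (H_λ)_{ii} < 1. -/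
open Matrix

lemma dp_self_nonneg {m : ℕ} (v : Fin m → ℝ) : 0 ≤ dotProduct v v :=
  Finset.sum_nonneg fun i _ => mul_self_nonneg _

lemma dp_sub_sub {m : ℕ} (a b : Fin m → ℝ) :
    dotProduct (a - b) (a - b)
      = dotProduct a a - 2 * dotProduct a b + dotProduct b b := by
  simp only [dotProduct, Pi.sub_apply, Finset.mul_sum,
    ← Finset.sum_sub_distrib, ← Finset.sum_add_distrib]
  exact Finset.sum_congr rfl fun i _ => by ring

lemma dp_add_add {m : ℕ} (a b : Fin m → ℝ) :
    dotProduct (a + b) (a + b)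
      = dotProduct a a + 2 * dotProduct a b + dotProduct b b := by
  simp only [dotProduct, Pi.add_apply, Finset.mul_sum,
    ← Finset.sum_add_distrib]
  exact Finset.sum_congr rfl fun i _ => by ring

-- invertibility of A = XᵀX + lam•1
lemma ridge_A_isUnit {n p : ℕ} (X : Matrix (Fin n) (Fin p) ℝ) {lam : ℝ} (hlam : 0 < lam) :
    IsUnit (Xᵀ * X + lam • (1 : Matrix (Fin p) (Fin p) ℝ)) := by
  set A := Xᵀ * X + lam • (1 : Matrix (Fin p) (Fin p) ℝ) with hA
  rw [← Matrix.mulVec_injective_iff_isUnit]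
  have key : ∀ v, A.mulVec v = 0 → v = 0 := by
    intro v hv
    have h1 : dotProduct v (A.mulVec v) = 0 := by rw [hv]; simp
    have h2 : dotProduct v (A.mulVec v)
        = dotProduct (X.mulVec v) (X.mulVec v) + lam * dotProduct v v := by
      rw [hA, Matrix.add_mulVec, dotProduct_add, Matrix.smul_mulVec,
        Matrix.one_mulVec, ← Matrix.mulVec_mulVec, Matrix.dotProduct_mulVec,
        Matrix.vecMul_transpose, dotProduct_smul]
      simp [smul_eq_mul]
    have h3 : 0 ≤ dotProduct (X.mulVec v) (X.mulVec v) := dp_self_nonneg _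
    have h4 : 0 ≤ dotProduct v v := dp_self_nonneg _
    have h5 : dotProduct v v = 0 := by nlinarith
    exact dotProduct_self_eq_zero.mp h5
  intro a b hab
  have : A.mulVec (a - b) = 0 := by rw [Matrix.mulVec_sub, hab, sub_self]
  have := key _ this
  exact sub_eq_zero.mp this

-- uniqueness of the ridge minimizer
lemma ridge_min_unique {n p : ℕ} (X : Matrix (Fin n) (Fin p) ℝ) (y : Fin n → ℝ)
    {lam : ℝ} (hlam : 0 < lam) (β : Fin p → ℝ)
    (hmin : ∀ γ : Fin p → ℝ,
      (∑ j, (y j - X.mulVec β j) ^ 2) + lam * ∑ l, (β l) ^ 2 ≤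
      (∑ j, (y j - X.mulVec γ j) ^ 2) + lam * ∑ l, (γ l) ^ 2) :
    β = ((Xᵀ * X + lam • (1 : Matrix (Fin p) (Fin p) ℝ))⁻¹ * Xᵀ).mulVec y := by
  set A := Xᵀ * X + lam • (1 : Matrix (Fin p) (Fin p) ℝ) with hAdef
  have hU : IsUnit A := ridge_A_isUnit X hlam
  set βs := (A⁻¹ * Xᵀ).mulVec y with hβs
  have hAβs : A.mulVec βs = Xᵀ.mulVec y := by
    rw [hβs, Matrix.mulVec_mulVec, ← Matrix.mul_assoc,
      Matrix.mul_nonsing_inv A (Matrix.isUnit_iff_isUnit_det A |>.mp hU), Matrix.one_mul]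
  set d := β - βs with hd
  set r := y - X.mulVec βs with hr
  -- cross term
  have hcross : dotProduct r (X.mulVec d) = lam * dotProduct βs d := by
    rw [Matrix.dotProduct_mulVec, ← Matrix.mulVec_transpose]
    have : Xᵀ.mulVec r = lam • βs := by
      rw [hr, Matrix.mulVec_sub, Matrix.mulVec_mulVec]
      have h1 : (Xᵀ * X).mulVec βs = A.mulVec βs - lam • βs := by
        rw [hAdef, Matrix.add_mulVec, Matrix.smul_mulVec, Matrix.one_mulVec]
        abel
      rw [h1, hAβs]
      abel
    rw [this, smul_dotProduct]
    simp [smul_eq_mul]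
  -- dot product versions of the objective sums
  have sumsq : ∀ (w : Fin n → ℝ) (γ : Fin p → ℝ),
      (∑ j, (w j - X.mulVec γ j) ^ 2) = dotProduct (w - X.mulVec γ) (w - X.mulVec γ) := by
    intro w γ
    simp [dotProduct, pow_two, Pi.sub_apply]
  have sumsq2 : ∀ γ : Fin p → ℝ, (∑ l, (γ l) ^ 2) = dotProduct γ γ := by
    intro γ
    simp [dotProduct, pow_two]
  have hβ : β = βs + d := by rw [hd]; abel
  have hrw : y - X.mulVec β = r - X.mulVec d := by
    rw [hβ, Matrix.mulVec_add, hr]; abel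
  have key := hmin βs
  rw [sumsq y β, sumsq y βs, sumsq2 β, sumsq2 βs, hrw, hβ] at key
  have e1 := dp_sub_sub r (X.mulVec d)
  have e2 := dp_add_add βs d
  rw [e1, e2, hcross] at key
  have hsr : y - X.mulVec βs = r := hr.symm
  rw [hsr] at key
  have h3 : 0 ≤ dotProduct (X.mulVec d) (X.mulVec d) := dp_self_nonneg _
  have h4 : 0 ≤ dotProduct d d := dp_self_nonneg _
  have h5 : dotProduct d d = 0 := by nlinarith
  have : d = 0 := dotProduct_self_eq_zero.mp h5
  rw [hβ, this, add_zero]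

/-- The ridge LOOCV shortcut formula:
`y_i - x_iᵀβ̂_{λ,-i} = (y_i - x_iᵀβ̂_λ)/(1 - (H_λ)_{ii})`. -/
theorem ridge_loocv_shortcut {n p : ℕ}
    (X : Matrix (Fin n) (Fin p) ℝ) (y : Fin n → ℝ)
    (lam : ℝ) (hlam : 0 < lam) (i : Fin n)
    (H : Matrix (Fin n) (Fin n) ℝ)
    (hH : H = X * (Xᵀ * X + lam • (1 : Matrix (Fin p) (Fin p) ℝ))⁻¹ * Xᵀ)
    (βfull : Fin p → ℝ)
    (hβfull : βfull =
      ((Xᵀ * X + lam • (1 : Matrix (Fin p) (Fin p) ℝ))⁻¹ * Xᵀ).mulVec y)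
    (βloo : Fin p → ℝ)
    (hmin : ∀ β : Fin p → ℝ,
      (∑ j ∈ Finset.univ.erase i, (y j - X.mulVec βloo j) ^ 2) +
          lam * ∑ l, (βloo l) ^ 2 ≤
        (∑ j ∈ Finset.univ.erase i, (y j - X.mulVec β j) ^ 2) +
          lam * ∑ l, (β l) ^ 2)
    (hHii : H i i < 1) :
    y i - X.mulVec βloo i = (y i - X.mulVec βfull i) / (1 - H i i) := by
  classical
  set yt : Fin n → ℝ := Function.update y i (X.mulVec βloo i) with hyt
  -- erase-sums with yt equal those with y
  have erase_eq : ∀ γ : Fin p → ℝ,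
      (∑ j ∈ Finset.univ.erase i, (yt j - X.mulVec γ j) ^ 2)
        = ∑ j ∈ Finset.univ.erase i, (y j - X.mulVec γ j) ^ 2 := by
    intro γ
    refine Finset.sum_congr rfl fun j hj => ?_
    rw [hyt, Function.update_of_ne (Finset.ne_of_mem_erase hj)]
  have split : ∀ (w : Fin n → ℝ) (γ : Fin p → ℝ),
      (∑ j, (w j - X.mulVec γ j) ^ 2)
        = (∑ j ∈ Finset.univ.erase i, (w j - X.mulVec γ j) ^ 2)
            + (w i - X.mulVec γ i) ^ 2 :=
    fun w γ => (Finset.sum_erase_add Finset.univ _ (Finset.mem_univ i)).symm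
  -- βloo minimizes the full-data ridge objective with yt
  have hmin' : ∀ γ : Fin p → ℝ,
      (∑ j, (yt j - X.mulVec βloo j) ^ 2) + lam * ∑ l, (βloo l) ^ 2 ≤
      (∑ j, (yt j - X.mulVec γ j) ^ 2) + lam * ∑ l, (γ l) ^ 2 := by
    intro γ
    rw [split yt βloo, split yt γ, erase_eq βloo, erase_eq γ]
    have hi0 : yt i - X.mulVec βloo i = 0 := by rw [hyt, Function.update_self]; ring
    rw [hi0]
    have := hmin γ
    nlinarith [sq_nonneg (yt i - X.mulVec γ i)]
  have hβloo := ridge_min_unique X yt hlam βloo hmin'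
  -- pointwise formulas via H
  have hXfull : X.mulVec βfull i = (H.mulVec y) i := by
    rw [hβfull, Matrix.mulVec_mulVec, hH]
    rw [Matrix.mul_assoc]
  have hXloo : X.mulVec βloo i = (H.mulVec yt) i := by
    rw [hβloo, Matrix.mulVec_mulVec, hH, Matrix.mul_assoc]
  -- compare H yt and H y
  have hdiff : (H.mulVec yt) i - (H.mulVec y) i = H i i * (X.mulVec βloo i - y i) := by
    have : (H.mulVec yt) i - (H.mulVec y) i = ∑ j, H i j * (yt j - y j) := by
      simp [Matrix.mulVec, dotProduct, ← Finset.sum_sub_distrib, mul_sub]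
    rw [this, Finset.sum_eq_single i]
    · rw [hyt, Function.update_self]
    · intro j _ hji
      rw [hyt, Function.update_of_ne hji]; ring
    · intro h; exact absurd (Finset.mem_univ i) h
  set a := X.mulVec βloo i
  set b := X.mulVec βfull i
  have hkey : a - b = H i i * (a - y i) := by
    rw [← hdiff, hXloo, hXfull]
  have h1 : 1 - H i i ≠ 0 := by intro h; nlinarith
  field_simp
  nlinarith [hkey]
end

section
/- (Correctness of the modified augmented system) Let β̂_{k,-i} be the k-th gradient descent iterate (with step sizes δ_0,…,δ_{k-1}, initialized at β̂_0) for least squares on the leave-one-out data (X_{-i}, y_{-i}), i.e. β̂_{k+1,-i} = β̂_{k,-i} + (δ_k/n) X_{-i}ᵀ(y_{-i} - X_{-i}β̂_{k,-i}). Define the augmented responses ỹ_{k,-i} ∈ ℝ^n by (ỹ_{k,-i})_j = y_j for j ≠ i and (ỹ_{k,-i})_i = x_iᵀβ̂_{k,-i}, and the augmented iterates by β̃_{0,-i} = β̂_0 and β̃_{k+1,-i} = β̃_{k,-i} + (δ_k/n) Xᵀ(ỹ_{k,-i} - Xβ̃_{k,-i}). Then β̃_{k,-i} = β̂_{k,-i}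 for all k and all i ∈ [n]. -/
open Matrix

/-- Correctness of the modified augmented system: running GD on the full
feature matrix with the responses augmented (at every iteration) by the
current leave-one-out prediction reproduces the leave-one-out GD iterates. -/
theorem modified_augmented_system_correct {n p : ℕ} (hn : 0 < n)
    (X : Matrix (Fin n) (Fin p) ℝ) (y : Fin n → ℝ)
    (δ : ℕ → ℝ) (β0 : Fin p → ℝ) (i : Fin n)
    (βloo : ℕ → Fin p → ℝ) (hloo0 : βloo 0 = β0)
    (hloorec : ∀ k, βloo (k + 1) = βloo k +
      (δ k / (n : ℝ)) • ∑ j ∈ Finset.univ.erase i,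
        (y j - ∑ l, X j l * βloo k l) • (fun l => X j l))
    (βaug : ℕ → Fin p → ℝ) (haug0 : βaug 0 = β0)
    (haugrec : ∀ k, βaug (k + 1) = βaug k +
      (δ k / (n : ℝ)) • ∑ j : Fin n,
        ((if j = i then ∑ l, X i l * βloo k l else y j) -
          ∑ l, X j l * βaug k l) • (fun l => X j l)) :
    ∀ k, βaug k = βloo k := by
  intro k
  induction k with
  | zero => rw [haug0, hloo0]
  | succ k ih =>
    rw [haugrec, hloorec, ih]
    have h : (∑ j : Fin n,
        ((if j = i then ∑ l, X i l * βloo k l else y j) -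
          ∑ l, X j l * βloo k l) • (fun l => X j l)) =
        ∑ j ∈ Finset.univ.erase i,
        (y j - ∑ l, X j l * βloo k l) • (fun l => X j l) := by
      rw [← Finset.sum_erase (f := fun j => ((if j = i then ∑ l, X i l * βloo k l else y j) -
          ∑ l, X j l * βloo k l) • (fun l => X j l)) (a := i) Finset.univ (by simp)]
      refine Finset.sum_congr rfl fun j hj => ?_
      rw [if_neg (Finset.ne_of_mem_erase hj)]
    rw [h]
end

section
/- (Propagation of norm bounds along GD) Suppose ‖Σ̂‖_op ≤ C and ‖y‖₂² ≤ n·m, where Σ̂ = XᵀX/n. Then the GD iterates β̂_{k+1} = β̂_k + (δ_k/n)Xᵀ(y - Xβ̂_k), with ‖β̂_0‖₂ ≤ B₀ and Σ_k δ_k ≤ Δ, satisfy ‖β̂_k‖₂ ≤ (B₀ + Δ C^{1/2}√m)·e^{CΔ} for all k. -/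
open Matrix

/-- Propagation of norm bounds along gradient descent: if `‖Σ̂‖_op ≤ C` and
`‖y‖₂² ≤ n·m`, then `‖β̂_k‖₂ ≤ (B₀ + Δ√C·√m)·e^{CΔ}` for all `k`. -/
theorem gd_norm_propagation {n p : ℕ} (hn : 0 < n)
    (X : Matrix (Fin n) (Fin p) ℝ) (y : Fin n → ℝ)
    (C m B0 Δ : ℝ) (δ : ℕ → ℝ) (hδ : ∀ k, 0 ≤ δ k)
    (hΔ : ∀ K : ℕ, ∑ k ∈ Finset.range K, δ k ≤ Δ)
    (enorm : (Fin p → ℝ) → ℝ)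
    (henorm : ∀ v, enorm v = Real.sqrt (∑ l, (v l) ^ 2))
    (hop : ∀ v : Fin p → ℝ,
      enorm (((1 / (n : ℝ)) • (Xᵀ * X)).mulVec v) ≤ C * enorm v)
    (hy : ∑ j, (y j) ^ 2 ≤ (n : ℝ) * m)
    (β : ℕ → Fin p → ℝ) (hβ0 : enorm (β 0) ≤ B0)
    (hrec : ∀ k, β (k + 1) = β k +
      (δ k / (n : ℝ)) • Xᵀ.mulVec (y - X.mulVec (β k))) :
    ∀ k, enorm (β k) ≤ (B0 + Δ * Real.sqrt C * Real.sqrt m) * Real.exp (C * Δ) := by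
  have hn' : (0:ℝ) < n := by exact_mod_cast hn
  have henn : ∀ v, 0 ≤ enorm v := fun v => by rw [henorm]; exact Real.sqrt_nonneg _
  have hB0 : 0 ≤ B0 := le_trans (henn (β 0)) hβ0
  have hΔ0 : 0 ≤ Δ := by simpa using hΔ 0
  have hysum : (0:ℝ) ≤ ∑ j, (y j) ^ 2 := Finset.sum_nonneg fun j _ => sq_nonneg _
  have hm : 0 ≤ m := by nlinarith
  rcases Nat.eq_zero_or_pos p with hp | hp
  · subst hp
    intro k
    have h0 : enorm (β k) = 0 := by rw [henorm]; simp
    rw [h0]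
    have h1 : (0:ℝ) ≤ B0 + Δ * Real.sqrt C * Real.sqrt m := by positivity
    positivity
  -- p > 0
  have hC : 0 ≤ C := by
    have h1 : enorm (fun _ : Fin p => (1:ℝ)) = Real.sqrt p := by
      rw [henorm]; simp
    have hps : (0:ℝ) < Real.sqrt p := Real.sqrt_pos.2 (by exact_mod_cast hp)
    have := le_trans (henn _) (hop (fun _ => (1:ℝ)))
    rw [h1] at this
    nlinarith
  -- basic norm facts
  have hsq : ∀ v : Fin p → ℝ, (enorm v)^2 = ∑ l, (v l) ^ 2 := fun v => by
    rw [henorm]; exact Real.sq_sqrt (Finset.sum_nonneg fun _ _ => sq_nonneg _)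
  have hCS : ∀ f g : Fin p → ℝ, ∑ i, f i * g i ≤ enorm f * enorm g := by
    intro f g; rw [henorm, henorm]; exact Real.sum_mul_le_sqrt_mul_sqrt _ _ _
  have htri : ∀ u v : Fin p → ℝ, enorm (u + v) ≤ enorm u + enorm v := by
    intro u v
    have hcs := hCS u v
    have expand : ∑ l, ((u + v) l)^2
        = (∑ l, (u l)^2) + 2*(∑ l, u l * v l) + ∑ l, (v l)^2 := by
      simp only [Pi.add_apply, add_sq]
      rw [Finset.sum_add_distrib, Finset.sum_add_distrib, Finset.mul_sum]
      ring_nf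
    have h1 : ∑ l, ((u + v) l)^2 ≤ (enorm u + enorm v)^2 := by
      nlinarith [hsq u, hsq v, henn u, henn v]
    calc enorm (u + v) = Real.sqrt (∑ l, ((u + v) l)^2) := henorm _
      _ ≤ Real.sqrt ((enorm u + enorm v)^2) := Real.sqrt_le_sqrt h1
      _ = enorm u + enorm v := Real.sqrt_sq (add_nonneg (henn u) (henn v))
  have hsmul : ∀ (c : ℝ) (v : Fin p → ℝ), 0 ≤ c → enorm (c • v) = c * enorm v := by
    intro c v hc
    rw [henorm, henorm]
    have : ∀ l, ((c • v) l)^2 = c^2 * (v l)^2 := fun l => by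
      simp [smul_eq_mul, mul_pow]
    simp_rw [this]
    rw [← Finset.mul_sum, Real.sqrt_mul (sq_nonneg c), Real.sqrt_sq hc]
  have hneg : ∀ v : Fin p → ℝ, enorm (-v) = enorm v := by
    intro v; rw [henorm, henorm]; simp
  -- key quantities
  set Sh : Matrix (Fin p) (Fin p) ℝ := (1 / (n : ℝ)) • (Xᵀ * X) with hSh
  set v0 : Fin p → ℝ := (1 / (n : ℝ)) • Xᵀ.mulVec y with hv0
  set a : ℝ := Real.sqrt C * Real.sqrt m with ha
  have ha0 : 0 ≤ a := mul_nonneg (Real.sqrt_nonneg _) (Real.sqrt_nonneg _)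
  -- ∑ (Xv)² = ∑ v * (XᵀX v)
  have swap : ∀ v : Fin p → ℝ,
      ∑ j, (X.mulVec v j)^2 = ∑ l, v l * ((Xᵀ * X).mulVec v) l := by
    intro v
    have h : v ⬝ᵥ ((Xᵀ * X).mulVec v) = (X.mulVec v) ⬝ᵥ (X.mulVec v) := by
      rw [← Matrix.mulVec_mulVec, Matrix.dotProduct_mulVec, Matrix.vecMul_transpose]
    simp only [dotProduct] at h
    simp_rw [sq]
    exact h.symm
  -- bound on ∑(Xv)² via hop
  have hXv : ∀ v : Fin p → ℝ, ∑ j, (X.mulVec v j)^2 ≤ (n:ℝ) * C * (enorm v)^2 := by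
    intro v
    rw [swap v]
    have h1 : (Xᵀ * X).mulVec v = (n:ℝ) • Sh.mulVec v := by
      rw [hSh, Matrix.smul_mulVec, smul_smul]
      rw [mul_one_div, div_self (ne_of_gt hn'), one_smul]
    rw [h1]
    have h2 : ∑ l, v l * ((n:ℝ) • Sh.mulVec v) l = (n:ℝ) * ∑ l, v l * (Sh.mulVec v) l := by
      rw [Finset.mul_sum]; congr 1; funext l; simp [smul_eq_mul]; ring
    rw [h2]
    have h3 : ∑ l, v l * (Sh.mulVec v) l ≤ enorm v * enorm (Sh.mulVec v) := hCS _ _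
    have h4 := hop v
    have h5 : (n:ℝ) * (∑ l, v l * (Sh.mulVec v) l) ≤ (n:ℝ) * (enorm v * enorm (Sh.mulVec v)) :=
      mul_le_mul_of_nonneg_left h3 hn'.le
    have h6 : enorm v * enorm (Sh.mulVec v) ≤ enorm v * (C * enorm v) :=
      mul_le_mul_of_nonneg_left h4 (henn v)
    have h7 : (n:ℝ) * (enorm v * enorm (Sh.mulVec v)) ≤ (n:ℝ) * (enorm v * (C * enorm v)) :=
      mul_le_mul_of_nonneg_left h6 hn'.le
    nlinarith [h5, h7]
  -- bound on enorm v0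
  have hkey : enorm v0 ≤ a := by
    set N := enorm v0 with hN
    have hN0 : 0 ≤ N := henn v0
    have e1 : N^2 = (1/(n:ℝ)) * ∑ j, (X.mulVec v0 j) * y j := by
      have h : v0 ⬝ᵥ (Xᵀ.mulVec y) = (X.mulVec v0) ⬝ᵥ y := by
        rw [Matrix.dotProduct_mulVec, Matrix.vecMul_transpose]
      simp only [dotProduct] at h
      rw [hsq v0, ← h, Finset.mul_sum]
      congr 1; funext l
      rw [hv0]; simp [smul_eq_mul]; ring
    have e2 : ∑ j, (X.mulVec v0 j) * y j
        ≤ Real.sqrt (∑ j, (X.mulVec v0 j)^2) * Real.sqrt (∑ j, (y j)^2) :=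
      Real.sum_mul_le_sqrt_mul_sqrt _ _ _
    have e3 : Real.sqrt (∑ j, (X.mulVec v0 j)^2) ≤ Real.sqrt ((n:ℝ) * C * N^2) :=
      Real.sqrt_le_sqrt (hXv v0)
    have e4 : Real.sqrt ((n:ℝ) * C * N^2) = Real.sqrt n * Real.sqrt C * N := by
      rw [Real.sqrt_mul (by positivity), Real.sqrt_mul (by positivity), Real.sqrt_sq hN0]
    have e5 : Real.sqrt (∑ j, (y j)^2) ≤ Real.sqrt ((n:ℝ) * m) := Real.sqrt_le_sqrt hy
    have e6 : Real.sqrt ((n:ℝ) * m) = Real.sqrt n * Real.sqrt m := Real.sqrt_mul (by positivity) _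
    have hsn : Real.sqrt (n:ℝ) ^ 2 = (n:ℝ) := Real.sq_sqrt (by positivity)
    have hsn0 : 0 ≤ Real.sqrt (n:ℝ) := Real.sqrt_nonneg _
    have e7 : N^2 ≤ a * N := by
      have h8 : ∑ j, (X.mulVec v0 j) * y j ≤ (Real.sqrt n * Real.sqrt C * N) * (Real.sqrt n * Real.sqrt m) := by
        calc ∑ j, (X.mulVec v0 j) * y j
            ≤ Real.sqrt (∑ j, (X.mulVec v0 j)^2) * Real.sqrt (∑ j, (y j)^2) := e2
          _ ≤ (Real.sqrt n * Real.sqrt C * N) * (Real.sqrt n * Real.sqrt m) := by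
              apply mul_le_mul (e3.trans e4.le) (e5.trans e6.le) (Real.sqrt_nonneg _)
              positivity
      calc N^2 = (1/(n:ℝ)) * ∑ j, (X.mulVec v0 j) * y j := e1
        _ ≤ (1/(n:ℝ)) * ((Real.sqrt n * Real.sqrt C * N) * (Real.sqrt n * Real.sqrt m)) := by
              apply mul_le_mul_of_nonneg_left h8 (by positivity)
        _ = Real.sqrt C * Real.sqrt m * N * ((Real.sqrt n)^2 / n) := by ring
        _ = a * N := by rw [hsn, div_self (ne_of_gt hn'), mul_one, ha]
    nlinarith
  -- one-step bound
  have hstep : ∀ k, enorm (β (k+1)) ≤ (1 + δ k * C) * enorm (β k) + δ k * a := by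
    intro k
    have hdecomp : β (k+1) = (β k + (δ k) • (-(Sh.mulVec (β k)))) + (δ k) • v0 := by
      rw [hrec k, Matrix.mulVec_sub, Matrix.mulVec_mulVec]
      funext l
      simp only [Pi.add_apply, Pi.smul_apply, Pi.sub_apply, Pi.neg_apply, smul_eq_mul,
        hv0, hSh, Matrix.smul_mulVec]
      field_simp
      ring
    rw [hdecomp]
    calc enorm ((β k + (δ k) • (-(Sh.mulVec (β k)))) + (δ k) • v0)
        ≤ enorm (β k + (δ k) • (-(Sh.mulVec (β k)))) + enorm ((δ k) • v0) := htri _ _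
      _ ≤ (enorm (β k) + enorm ((δ k) • (-(Sh.mulVec (β k))))) + enorm ((δ k) • v0) := by
          linarith [htri (β k) ((δ k) • (-(Sh.mulVec (β k))))]
      _ = enorm (β k) + δ k * enorm (Sh.mulVec (β k)) + δ k * enorm v0 := by
          rw [hsmul _ _ (hδ k), hsmul _ _ (hδ k), hneg]
      _ ≤ (1 + δ k * C) * enorm (β k) + δ k * a := by
          have h1 := hop (β k)
          nlinarith [hδ k, henn (β k), mul_le_mul_of_nonneg_left h1 (hδ k),
            mul_le_mul_of_nonneg_left hkey (hδ k)]
  -- induction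
  have main : ∀ K, enorm (β K) ≤
      (B0 + a * ∑ k ∈ Finset.range K, δ k) * ∏ k ∈ Finset.range K, (1 + δ k * C) := by
    intro K
    induction K with
    | zero => simpa using hβ0
    | succ K ih =>
      rw [Finset.sum_range_succ, Finset.prod_range_succ]
      set P : ℝ := ∏ k ∈ Finset.range K, (1 + δ k * C) with hPdef
      set S : ℝ := ∑ k ∈ Finset.range K, δ k with hSdef
      have hP : 1 ≤ P := by
        rw [hPdef]
        calc (1:ℝ) = ∏ k ∈ Finset.range K, 1 := by simp
          _ ≤ ∏ k ∈ Finset.range K, (1 + δ k * C) :=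
            Finset.prod_le_prod (fun i _ => by norm_num) (fun i _ => by have h := mul_nonneg (hδ i) hC; linarith)
      have hS : 0 ≤ S := by
        rw [hSdef]; exact Finset.sum_nonneg fun i _ => hδ i
      have hdC : 0 ≤ δ K * C := mul_nonneg (hδ K) hC
      have h1 : (1:ℝ) ≤ 1 + δ K * C := by linarith
      have h2 := mul_le_mul_of_nonneg_left ih (le_trans zero_le_one h1)
      have h3 := hstep K
      have hQ : 1 ≤ P * (1 + δ K * C) := by
        calc (1:ℝ) = 1 * 1 := by ring
          _ ≤ P * (1 + δ K * C) := mul_le_mul hP h1 zero_le_one (le_trans zero_le_one hP)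
      have h9 : a * δ K ≤ a * δ K * (P * (1 + δ K * C)) :=
        le_mul_of_one_le_right (mul_nonneg ha0 (hδ K)) hQ
      have ering : (B0 + a*(S + δ K)) * (P*(1+δ K*C))
          = (1 + δ K * C) * ((B0 + a*S)*P) + a * δ K * (P*(1+δ K*C)) := by ring
      linarith [h2, h3, h9]
  intro k
  have hS := hΔ k
  have hS0 : 0 ≤ ∑ i ∈ Finset.range k, δ i := Finset.sum_nonneg fun i _ => hδ i
  have hP1 : 1 ≤ ∏ i ∈ Finset.range k, (1 + δ i * C) := by
    calc (1:ℝ) = ∏ i ∈ Finset.range k, 1 := by simp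
      _ ≤ ∏ i ∈ Finset.range k, (1 + δ i * C) :=
        Finset.prod_le_prod (fun i _ => by norm_num) (fun i _ => by have h := mul_nonneg (hδ i) hC; linarith)
  have hPe : ∏ i ∈ Finset.range k, (1 + δ i * C) ≤ Real.exp (C * Δ) := by
    calc ∏ i ∈ Finset.range k, (1 + δ i * C)
        ≤ ∏ i ∈ Finset.range k, Real.exp (δ i * C) := by
          apply Finset.prod_le_prod (fun i _ => by have h := mul_nonneg (hδ i) hC; linarith)
          intro i _
          have := Real.add_one_le_exp (δ i * C)
          linarith
      _ = Real.exp (∑ i ∈ Finset.range k, δ i * C) := by rw [Real.exp_sum]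
      _ ≤ Real.exp (C * Δ) := by
          apply Real.exp_le_exp.2
          rw [← Finset.sum_mul]
          have h := mul_le_mul_of_nonneg_right hS hC
          linarith
  calc enorm (β k) ≤ (B0 + a * ∑ i ∈ Finset.range k, δ i) * ∏ i ∈ Finset.range k, (1 + δ i * C) :=
        main k
    _ ≤ (B0 + Δ * Real.sqrt C * Real.sqrt m) * Real.exp (C * Δ) := by
        apply mul_le_mul _ hPe (by linarith) _
        · rw [ha]
          have h := mul_le_mul_of_nonneg_left hS
            (mul_nonneg (Real.sqrt_nonneg C) (Real.sqrt_nonneg m))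
          linarith
        · have h := mul_nonneg (mul_nonneg hΔ0 (Real.sqrt_nonneg C)) (Real.sqrt_nonneg m)
          linarith
end
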